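/- arXiv:1211.6897 — 5 statements merged into one kernel-verified Lean document; each statement's English description precedes it below -/
import Mathlib

section
/- Let k be a field of characteristic p > 0 and R(n,r) = k[x_1,...,x_n]/(x_1^{p^r},...,x_n^{p^r}). A choice of elements g_1,...,g_n in R(n,r)⊗A (for a commutative k-algebra A) defines an A-algebra automorphism g of R(n,r)⊗A with g(x_i)=g_i if and only if g_i(0)^{p^r}=0 for all i and the Jacobian matrix J_g = (∂g_j/∂x_i(0))_{ij} is invertible in M_n(A). -/
open MvPolynomial

/-- `R(n,r) ⊗_k A` modeled as `A[x_1,...,x_n]/(x_i^{p^r})` (with `q = p^r`). -/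
abbrev Rq (A : Type) [CommRing A] (n q : ℕ) : Type :=
  MvPolynomial (Fin n) A ⧸
    Ideal.span (Set.range fun i : Fin n => (X i : MvPolynomial (Fin n) A) ^ q)

/-!
Write `q = p ^ r` and `m = (x_1, …, x_n)`, a nilpotent ideal of `R(n,r)_A = A ⊕ m`. As `q ≥ 2`,
the relations `x_i ^ q` have no constant and no linear terms. So if `g` is an automorphism,
`g_i ^ q = g (x_i ^ q) = 0` forces `g_i(0) ^ q = 0`, and differentiating `x_j = g (h_j)` at `0`
by the chain rule exhibits a right inverse of `J_g`. Conversely, in characteristic `p` the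
Frobenius gives `g_i ^ q = g_i(0) ^ q = 0`, so `x_i ↦ g_i` defines an endomorphism `g`. If `J_g`
is invertible, `A`-linear combinations of the `g_j - g_j(0)` agree with the `x_i` modulo `m ^ 2`;
as `m` is nilpotent, the image of `g` is then everything. Finally a surjective endomorphism of
the finite `A`-module `R(n,r)_A` is bijective.
-/

lemma Finsupp.eq_zero_or_eq_single_one_of_degree_lt_two {σ : Type*} {x : σ →₀ ℕ}
    (h : x.degree < 2) : x = 0 ∨ ∃ i, x = single i 1 := by
  rcases eq_or_ne x 0 with rfl | hx
  · exact Or.inl rfl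
  obtain ⟨i, hi⟩ := Finsupp.support_nonempty_iff.mpr hx
  obtain ⟨y, rfl⟩ := le_iff_exists_add.mp
    (show single i 1 ≤ x by simpa [Nat.one_le_iff_ne_zero] using hi)
  have hy : y.degree = 0 := by simp only [map_add, degree_single] at h; omega
  exact Or.inr ⟨i, by rw [(degree_eq_zero_iff y).mp hy, add_zero]⟩

theorem Ideal.pow_mem_span_pow_of_mem_span {S : Type*} [CommRing S] (p : ℕ) [ExpChar S p]
    (r : ℕ) {s : Set S} {u : S} (hu : u ∈ Ideal.span s) :
    u ^ p ^ r ∈ Ideal.span ((· ^ p ^ r) '' s) := by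
  induction hu using Submodule.span_induction with
  | mem x hx => exact Ideal.subset_span ⟨x, hx, rfl⟩
  | zero => rw [zero_pow (pow_ne_zero _ (expChar_pos S p).ne')]; exact zero_mem _
  | add x y _ _ hx hy => rw [add_pow_expChar_pow]; exact add_mem hx hy
  | smul a x _ hx => rw [smul_eq_mul, mul_pow]; exact Ideal.mul_mem_left _ _ hx

namespace MvPolynomial

variable {σ R : Type*} [CommRing R]

theorem eval_zero_pderiv (i : σ) (F : MvPolynomial σ R) :
    eval 0 (pderiv i F) = coeff (Finsupp.single i 1) F := by
  simp [eval_zero, constantCoeff_eq, coeff_pderiv]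

theorem sub_C_coeff_zero_mem_idealOfVars (F : MvPolynomial σ R) :
    F - C (coeff 0 F) ∈ idealOfVars σ R := by
  rw [← pow_one (idealOfVars _ _), mem_pow_idealOfVars_iff']
  intro x hx
  rw [Nat.lt_one_iff, Finsupp.degree_eq_zero_iff] at hx
  simp [hx]

theorem mem_idealOfVars_sq_iff (F : MvPolynomial σ R) :
    F ∈ idealOfVars σ R ^ 2 ↔ coeff 0 F = 0 ∧ ∀ i, coeff (Finsupp.single i 1) F = 0 := by
  rw [mem_pow_idealOfVars_iff']
  refine ⟨fun h => ⟨h 0 (by simp), fun i => h _ (by simp)⟩, ?_⟩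
  rintro ⟨h0, h1⟩ x hx
  rcases Finsupp.eq_zero_or_eq_single_one_of_degree_lt_two hx with rfl | ⟨i, rfl⟩
  exacts [h0, h1 i]

theorem pderiv_aeval {τ : Type*} [Fintype τ] (G : τ → MvPolynomial σ R) (i : σ)
    (H : MvPolynomial τ R) :
    pderiv i (aeval G H) = ∑ l, aeval G (pderiv l H) * pderiv i (G l) := by
  classical
  induction H using MvPolynomial.induction_on with
  | C a => simp
  | add f g hf hg => simp only [map_add, hf, hg, add_mul, Finset.sum_add_distrib]
  | mul_X f j hf =>
    simp only [map_mul, aeval_X, pderiv_mul, hf, pderiv_X, Pi.single_apply, map_add, add_mul,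
      Finset.sum_add_distrib, Finset.sum_mul, apply_ite (aeval G), map_zero, mul_ite,
      mul_one, mul_zero, ite_mul, zero_mul, Finset.sum_ite_eq, Finset.mem_univ, if_true]
    congr 1
    exact Finset.sum_congr rfl fun l _ => by ring

variable [Fintype σ] [DecidableEq σ]

theorem jacobian_mul_eq_one_of_X_sub_aeval_mem_idealOfVars_sq (G H : σ → MvPolynomial σ R)
    (hGH : ∀ j, X j - aeval G (H j) ∈ idealOfVars σ R ^ 2) :
    (Matrix.of fun i j => eval 0 (pderiv i (G j))) *
      (Matrix.of fun l j => eval 0 (aeval G (pderiv l (H j)))) = 1 := by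
  ext i j
  have h := ((mem_idealOfVars_sq_iff _).mp (hGH j)).2 i
  rw [← eval_zero_pderiv, map_sub, pderiv_aeval, map_sub, map_sum, sub_eq_zero] at h
  have hX : eval (0 : σ → R) (pderiv i (X j)) = if i = j then 1 else 0 := by
    rcases eq_or_ne i j with rfl | hij
    · simp
    · simp [pderiv_X_of_ne (Ne.symm hij), hij]
  rw [Matrix.mul_apply, Matrix.one_apply, ← hX, h]
  exact Finset.sum_congr rfl fun l _ => by rw [map_mul, mul_comm, Matrix.of_apply, Matrix.of_apply]

theorem X_sub_sum_smul_mem_idealOfVars_sq (G : σ → MvPolynomial σ R) (M : Matrix σ σ R)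
    (hM : (Matrix.of fun i j => eval 0 (pderiv i (G j))) * M = 1) (i : σ) :
    X i - ∑ j, M j i • (G j - C (coeff 0 (G j))) ∈ idealOfVars σ R ^ 2 := by
  have hlin : ∀ l, coeff (Finsupp.single l 1) (∑ j, M j i • (G j - C (coeff 0 (G j)))) =
      ((Matrix.of fun i j => eval 0 (pderiv i (G j))) * M) l i := fun l => by
    simp only [coeff_sum, coeff_smul, coeff_sub, coeff_C, smul_eq_mul, Matrix.mul_apply,
      if_neg (Finsupp.single_ne_zero.mpr one_ne_zero).symm, sub_zero, Matrix.of_apply,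
      eval_zero_pderiv, mul_comm]
  refine (mem_idealOfVars_sq_iff _).mpr ⟨by simp [coeff_sum], fun l => ?_⟩
  rw [coeff_sub, hlin, hM, Matrix.one_apply, coeff_X]
  simp [Finsupp.single_left_inj, eq_comm]

end MvPolynomial

namespace Subalgebra

variable {A B : Type*} [CommRing A] [CommRing B] [Algebra A B] {m : Ideal B} {S : Subalgebra A B}

theorem exists_sub_mem_sq_of_span {ι : Type*} {x y : ι → B} (hm : m = Ideal.span (Set.range x))
    (hA : ∀ b : B, ∃ a : A, b - algebraMap A B a ∈ m) (hy : ∀ i, y i ∈ S)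
    (hxy : ∀ i, x i - y i ∈ m ^ 2) {z : B} (hz : z ∈ m) : ∃ s ∈ S, z - s ∈ m ^ 2 := by
  rw [hm] at hz
  induction hz using Submodule.span_induction with
  | mem _ h =>
    obtain ⟨i, rfl⟩ := h
    exact ⟨y i, hy i, hxy i⟩
  | zero => exact ⟨0, S.zero_mem, by simp⟩
  | add u v _ _ hu hv =>
    obtain ⟨s, hs, hus⟩ := hu
    obtain ⟨t, ht, hvt⟩ := hv
    exact ⟨s + t, S.add_mem hs ht, by convert add_mem hus hvt using 1; ring⟩
  | smul b u hu hus =>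
    obtain ⟨s, hs, hus⟩ := hus
    obtain ⟨a, hba⟩ := hA b
    refine ⟨a • s, S.smul_mem hs a, ?_⟩
    have hsplit : b • u - a • s = algebraMap A B a * (u - s) + (b - algebraMap A B a) * u := by
      rw [smul_eq_mul, Algebra.smul_def]; ring
    rw [hsplit, sq]
    exact add_mem (Ideal.mul_mem_left _ _ (sq m ▸ hus)) (Ideal.mul_mem_mul hba (hm ▸ hu))

theorem exists_sub_mem_pow_succ (hA : ∀ b : B, ∃ a : A, b - algebraMap A B a ∈ m)
    (h1 : ∀ z ∈ m, ∃ s ∈ S, z - s ∈ m ^ 2) (k : ℕ) {z : B} (hz : z ∈ m ^ k) :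
    ∃ s ∈ S, z - s ∈ m ^ (k + 1) := by
  induction k generalizing z with
  | zero =>
    obtain ⟨a, ha⟩ := hA z
    exact ⟨_, S.algebraMap_mem a, by rwa [zero_add, pow_one]⟩
  | succ k ih =>
    rw [pow_succ'] at hz
    refine Submodule.mul_induction_on hz (fun u hu v hv => ?_) ?_
    · obtain ⟨s, hs, hus⟩ := h1 u hu
      obtain ⟨t, ht, hvt⟩ := ih hv
      have hsm : s ∈ m := by
        simpa using sub_mem hu (Ideal.pow_le_self two_ne_zero hus)
      refine ⟨s * t, S.mul_mem hs ht, ?_⟩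
      have hsplit : u * v - s * t = s * (v - t) + (u - s) * v := by ring
      rw [hsplit]
      refine add_mem ?_ ?_
      · rw [pow_succ' m (k + 1)]
        exact Ideal.mul_mem_mul hsm hvt
      · rw [show k + 1 + 1 = 2 + k by omega, pow_add]
        exact Ideal.mul_mem_mul hus hv
    · rintro u v ⟨s, hs, hus⟩ ⟨t, ht, hvt⟩
      exact ⟨s + t, S.add_mem hs ht, by convert add_mem hus hvt using 1; ring⟩

theorem eq_top_of_isNilpotent (hA : ∀ b : B, ∃ a : A, b - algebraMap A B a ∈ m)
    (hm : IsNilpotent m) (h1 : ∀ z ∈ m, ∃ s ∈ S, z - s ∈ m ^ 2) : S = ⊤ := by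
  obtain ⟨N, hN⟩ := hm
  -- downward induction on `k`, starting from `m ^ N = 0`
  suffices h : ∀ d k, N ≤ k + d → ∀ z ∈ m ^ k, z ∈ S from
    eq_top_iff.mpr fun z _ => h N 0 (by omega) z (by simp)
  intro d
  induction d with
  | zero =>
    intro k hk z hz
    have hz0 : z ∈ m ^ N := Ideal.pow_le_pow_right hk hz
    rw [hN, Ideal.zero_eq_bot, Ideal.mem_bot] at hz0
    exact hz0 ▸ S.zero_mem
  | succ d ih =>
    intro k hk z hz
    obtain ⟨s, hs, hzs⟩ := exists_sub_mem_pow_succ hA h1 k hz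
    simpa using S.add_mem hs (ih (k + 1) (by omega) _ hzs)

end Subalgebra

namespace Rq

variable {A : Type} [CommRing A] {n q : ℕ}

noncomputable abbrev ideal (A : Type) [CommRing A] (n q : ℕ) : Ideal (MvPolynomial (Fin n) A) :=
  Ideal.span (Set.range fun i : Fin n => (X i : MvPolynomial (Fin n) A) ^ q)

theorem mk_X_pow (i : Fin n) : Ideal.Quotient.mk (ideal A n q) (X i) ^ q = 0 := by
  rw [← map_pow, Ideal.Quotient.eq_zero_iff_mem]
  exact Ideal.subset_span ⟨i, rfl⟩

theorem ideal_le_idealOfVars_sq (hq : 2 ≤ q) : ideal A n q ≤ idealOfVars (Fin n) A ^ 2 := by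
  refine Ideal.span_le.mpr ?_
  rintro _ ⟨i, rfl⟩
  have hX : (X i : MvPolynomial (Fin n) A) ∈ idealOfVars (Fin n) A :=
    Ideal.subset_span (Set.mem_range_self i)
  exact Ideal.pow_le_pow_right hq (Ideal.pow_mem_pow hX q)

noncomputable def varsIdeal (A : Type) [CommRing A] (n q : ℕ) : Ideal (Rq A n q) :=
  Ideal.span (Set.range fun i => Ideal.Quotient.mk (ideal A n q) (X i))

theorem varsIdeal_eq_map :
    varsIdeal A n q = (idealOfVars (Fin n) A).map (Ideal.Quotient.mk (ideal A n q)) := by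
  rw [varsIdeal, idealOfVars, Ideal.map_span, ← Set.range_comp]
  rfl

theorem isNilpotent_varsIdeal : IsNilpotent (varsIdeal A n q) := by
  rw [varsIdeal, Ideal.FG.isNilpotent_iff_le_nilradical (Submodule.fg_span (Set.finite_range _)),
    Ideal.span_le]
  rintro _ ⟨i, rfl⟩
  exact ⟨q, mk_X_pow i⟩

theorem exists_sub_algebraMap_mem_varsIdeal (z : Rq A n q) :
    ∃ a : A, z - algebraMap A _ a ∈ varsIdeal A n q := by
  obtain ⟨F, rfl⟩ := Ideal.Quotient.mk_surjective z
  refine ⟨coeff 0 F, ?_⟩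
  have h := Ideal.mem_map_of_mem (Ideal.Quotient.mk (ideal A n q))
    (sub_C_coeff_zero_mem_idealOfVars F)
  rw [← varsIdeal_eq_map, map_sub] at h
  exact h

instance : Module.Finite A (Rq A n q) := by
  have : Algebra.IsIntegral A (Rq A n q) := ⟨fun z => by
    obtain ⟨a, ha⟩ := exists_sub_algebraMap_mem_varsIdeal z
    obtain ⟨N, hN⟩ := isNilpotent_varsIdeal (A := A) (n := n) (q := q)
    have hnil : (z - algebraMap A _ a) ^ (N + 1) = 0 := by
      simpa [hN] using Ideal.pow_le_pow_right N.le_succ (Ideal.pow_mem_pow ha (N + 1))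
    have hint : IsIntegral A (z - algebraMap A _ a) :=
      IsIntegral.of_pow N.succ_pos (hnil ▸ isIntegral_zero)
    simpa using hint.add (isIntegral_algebraMap (x := a))⟩
  exact Algebra.IsIntegral.finite

noncomputable def lift {B : Type*} [CommRing B] [Algebra A B] (g : Fin n → B)
    (hg : ∀ i, g i ^ q = 0) : Rq A n q →ₐ[A] B :=
  Ideal.Quotient.liftₐ _ (aeval g) fun F hF => by
    have hker : ideal A n q ≤ RingHom.ker (aeval g) := Ideal.span_le.mpr (by
      rintro _ ⟨i, rfl⟩
      simp [hg i])
    exact hker hF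

theorem lift_mk {B : Type*} [CommRing B] [Algebra A B] (g : Fin n → B) (hg : ∀ i, g i ^ q = 0)
    (F : MvPolynomial (Fin n) A) : lift g hg (Ideal.Quotient.mk _ F) = aeval g F :=
  rfl

theorem map_mk_eq_mk_aeval {G : Fin n → MvPolynomial (Fin n) A} (φ : Rq A n q →ₐ[A] Rq A n q)
    (hφ : ∀ i, φ (Ideal.Quotient.mk _ (X i)) = Ideal.Quotient.mk _ (G i))
    (F : MvPolynomial (Fin n) A) :
    φ (Ideal.Quotient.mk _ F) = Ideal.Quotient.mk _ (aeval G F) := by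
  have h : φ.comp (Ideal.Quotient.mkₐ A _) = (Ideal.Quotient.mkₐ A _).comp (aeval G) :=
    algHom_ext fun i => by simpa using hφ i
  exact DFunLike.congr_fun h F

theorem eval_zero_pow_eq_zero_of_mk_pow_eq_zero (hq : 2 ≤ q) {F : MvPolynomial (Fin n) A}
    (hF : Ideal.Quotient.mk (ideal A n q) F ^ q = 0) : eval 0 F ^ q = 0 := by
  rw [← map_pow, Ideal.Quotient.eq_zero_iff_mem] at hF
  rw [← map_pow, eval_zero, constantCoeff_eq]
  exact ((mem_idealOfVars_sq_iff _).mp (ideal_le_idealOfVars_sq hq hF)).1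

theorem mk_pow_eq_zero_of_eval_zero_pow_eq_zero (p r : ℕ) [Fact p.Prime] [CharP A p]
    {F : MvPolynomial (Fin n) A} (hF : eval 0 F ^ p ^ r = 0) :
    Ideal.Quotient.mk (ideal A n (p ^ r)) F ^ p ^ r = 0 := by
  have hF' : (F - C (coeff 0 F)) ^ p ^ r ∈ ideal A n (p ^ r) := by
    have h := Ideal.pow_mem_span_pow_of_mem_span p r (sub_C_coeff_zero_mem_idealOfVars F)
    rwa [← Set.range_comp] at h
  rw [eval_zero, constantCoeff_eq] at hF
  rw [← map_pow, Ideal.Quotient.eq_zero_iff_mem,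
    show F = (F - C (coeff 0 F)) + C (coeff 0 F) by ring, add_pow_char_pow, ← C_pow, hF, C_0,
    add_zero]
  exact hF'

theorem isUnit_jacobian_of_surjective (hq : 2 ≤ q) {G : Fin n → MvPolynomial (Fin n) A}
    (φ : Rq A n q →ₐ[A] Rq A n q)
    (hφ : ∀ i, φ (Ideal.Quotient.mk _ (X i)) = Ideal.Quotient.mk _ (G i))
    (hsurj : Function.Surjective φ) :
    IsUnit (Matrix.of fun i j : Fin n => eval (0 : Fin n → A) (pderiv i (G j))) := by
  have hpre : ∀ j, ∃ H, φ (Ideal.Quotient.mk _ H) = Ideal.Quotient.mk (ideal A n q) (X j) :=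
    fun j => by
      obtain ⟨z, hz⟩ := hsurj (Ideal.Quotient.mk _ (X j))
      obtain ⟨H, rfl⟩ := Ideal.Quotient.mk_surjective z
      exact ⟨H, hz⟩
  choose H hH using hpre
  have hGH : ∀ j, X j - aeval G (H j) ∈ idealOfVars (Fin n) A ^ 2 := fun j => by
    have h := hH j
    rw [map_mk_eq_mk_aeval φ hφ, Eq.comm, Ideal.Quotient.eq] at h
    exact ideal_le_idealOfVars_sq hq h
  exact (Matrix.isUnit_iff_isUnit_det _).mpr <| Matrix.isUnit_det_of_right_inverse <|
    jacobian_mul_eq_one_of_X_sub_aeval_mem_idealOfVars_sq G H hGH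

theorem surjective_of_isUnit_jacobian {G : Fin n → MvPolynomial (Fin n) A}
    (φ : Rq A n q →ₐ[A] Rq A n q)
    (hφ : ∀ i, φ (Ideal.Quotient.mk _ (X i)) = Ideal.Quotient.mk _ (G i))
    (hJ : IsUnit (Matrix.of fun i j : Fin n => eval (0 : Fin n → A) (pderiv i (G j)))) :
    Function.Surjective φ := by
  set J := Matrix.of fun i j : Fin n => eval (0 : Fin n → A) (pderiv i (G j))
  have hJJ : J * J⁻¹ = 1 := Matrix.mul_nonsing_inv J ((Matrix.isUnit_iff_isUnit_det J).mp hJ)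
  let Y : Fin n → MvPolynomial (Fin n) A := fun i =>
    ∑ j, J⁻¹ j i • (G j - C (coeff 0 (G j)))
  have hYφ : ∀ i, Ideal.Quotient.mk (ideal A n q) (Y i) ∈ φ.range := fun i => by
    rw [← Ideal.Quotient.mkₐ_eq_mk A]
    simp only [Y, map_sum, map_smul, map_sub]
    refine Subalgebra.sum_mem _ fun j _ => Subalgebra.smul_mem _ (Subalgebra.sub_mem _ ?_ ?_) _
    · rw [Ideal.Quotient.mkₐ_eq_mk, ← hφ j]
      exact φ.mem_range_self _
    · exact Subalgebra.algebraMap_mem _ (coeff 0 (G j))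
  have hXY : ∀ i, Ideal.Quotient.mk _ (X i) - Ideal.Quotient.mk _ (Y i) ∈ varsIdeal A n q ^ 2 :=
    fun i => by
      rw [← map_sub, varsIdeal_eq_map, ← Ideal.map_pow]
      exact Ideal.mem_map_of_mem _ (X_sub_sum_smul_mem_idealOfVars_sq G J⁻¹ hJJ i)
  exact (AlgHom.range_eq_top φ).mp <| Subalgebra.eq_top_of_isNilpotent
    exists_sub_algebraMap_mem_varsIdeal isNilpotent_varsIdeal fun _ hz =>
      Subalgebra.exists_sub_mem_sq_of_span rfl exists_sub_algebraMap_mem_varsIdeal hYφ hXY hz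

end Rq

theorem stmt_0_general (k : Type) [Field k] (p : ℕ) [Fact p.Prime] [CharP k p]
    (n r : ℕ) (hr : 1 ≤ r)
    (A : Type) [CommRing A] [Algebra k A]
    (G : Fin n → MvPolynomial (Fin n) A) :
    (∃ φ : Rq A n (p ^ r) ≃ₐ[A] Rq A n (p ^ r),
        ∀ i, φ (Ideal.Quotient.mk _ (X i)) = Ideal.Quotient.mk _ (G i)) ↔
      ((∀ i, (eval (0 : Fin n → A) (G i)) ^ p ^ r = 0) ∧
        IsUnit (Matrix.of fun i j : Fin n => eval (0 : Fin n → A) (pderiv i (G j)))) := by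
  have hq : 2 ≤ p ^ r := (Fact.out : p.Prime).two_le.trans (Nat.le_self_pow (by omega) p)
  rcases subsingleton_or_nontrivial A with _ | _
  · exact iff_of_true ⟨AlgEquiv.refl, fun _ => Subsingleton.elim _ _⟩
      ⟨fun _ => Subsingleton.elim _ _, isUnit_of_subsingleton _⟩
  have : CharP A p := charP_of_injective_algebraMap' k p
  constructor
  · rintro ⟨φ, hφ⟩
    refine ⟨fun i => Rq.eval_zero_pow_eq_zero_of_mk_pow_eq_zero hq ?_,
      Rq.isUnit_jacobian_of_surjective hq φ.toAlgHom hφ φ.surjective⟩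
    rw [← hφ, ← map_pow, Rq.mk_X_pow, map_zero]
  · rintro ⟨h0, hJ⟩
    let φ : Rq A n (p ^ r) →ₐ[A] Rq A n (p ^ r) := Rq.lift (fun i => Ideal.Quotient.mk _ (G i))
      fun i => Rq.mk_pow_eq_zero_of_eval_zero_pow_eq_zero p r (h0 i)
    have hφ : ∀ i, φ (Ideal.Quotient.mk _ (X i)) = Ideal.Quotient.mk _ (G i) := fun i =>
      (Rq.lift_mk _ _ _).trans (aeval_X _ i)
    have hsurj := Rq.surjective_of_isUnit_jacobian φ hφ hJ
    exact ⟨AlgEquiv.ofBijective φ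
      ⟨OrzechProperty.injective_of_surjective_endomorphism φ.toLinearMap hsurj, hsurj⟩, hφ⟩

/-- A choice of elements `g_1,...,g_n` (given by representatives `G i`) in
`R(n,r)_A` defines an `A`-algebra automorphism `g` of `R(n,r)_A` with `g(x_i) = g_i`
if and only if `g_i(0)^{p^r} = 0` for all `i` and the Jacobian matrix
`J_g = (∂g_j/∂x_i(0))_{ij}` is invertible over `A`. -/
theorem stmt_0 (k : Type) [Field k] (p : ℕ) [Fact p.Prime] [CharP k p]
    (n r : ℕ) (hn : 1 ≤ n) (hr : 1 ≤ r)
    (A : Type) [CommRing A] [Algebra k A]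
    (G : Fin n → MvPolynomial (Fin n) A) :
    (∃ φ : Rq A n (p ^ r) ≃ₐ[A] Rq A n (p ^ r),
        ∀ i, φ (Ideal.Quotient.mk _ (X i)) = Ideal.Quotient.mk _ (G i)) ↔
      ((∀ i, (eval (0 : Fin n → A) (G i)) ^ p ^ r = 0) ∧
        IsUnit (Matrix.of fun i j : Fin n => eval (0 : Fin n → A) (pderiv i (G j)))) :=
  stmt_0_general k p n r hr A G
end

section
/- Let f: G → H be a triangulated homomorphism between pretriangulated algebraic k-groups G = G⁻G⁰G⁺ and H = H⁻H⁰H⁺. Then the kernel of f is pretriangulated by Ker(f) = Ker(f⁻)Ker(f⁰)Ker(f⁺), i.e., the multiplication map Ker(f⁻) × Ker(f⁰) × Ker(f⁺) → Ker(f) is an isomorphism of k-schemes. -/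
/-- (pointwise, i.e. `A`-points, formulation of the scheme statement).
Let `f : G → H` be a triangulated homomorphism between pretriangulated algebraic
`k`-groups `G = G⁻G⁰G⁺` and `H = H⁻H⁰H⁺` (pretriangulation = the multiplication map
`G⁻ × G⁰ × G⁺ → G` is bijective on points, and similarly for `H`; triangulated = `f`
maps each factor of `G` into the corresponding factor of `H`).  Then the kernel of `f`
is pretriangulated by `Ker(f) = Ker(f⁻)Ker(f⁰)Ker(f⁺)`, i.e. the multiplication map
`Ker(f⁻) × Ker(f⁰) × Ker(f⁺) → Ker(f)` is bijective. -/
theorem stmt_2 {G H : Type*} [Group G] [Group H]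
    (Gm G0 Gp : Subgroup G) (Hm H0 Hp : Subgroup H)
    (hG : Function.Bijective (fun t : Gm × G0 × Gp => ((t.1 : G) * t.2.1) * t.2.2))
    (hH : Function.Bijective (fun t : Hm × H0 × Hp => ((t.1 : H) * t.2.1) * t.2.2))
    (f : G →* H)
    (hfm : ∀ g ∈ Gm, f g ∈ Hm) (hf0 : ∀ g ∈ G0, f g ∈ H0) (hfp : ∀ g ∈ Gp, f g ∈ Hp) :
    Function.Bijective
      (fun t : ↥(Gm ⊓ f.ker) × ↥(G0 ⊓ f.ker) × ↥(Gp ⊓ f.ker) =>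
        (⟨((t.1 : G) * t.2.1) * t.2.2, by
            have h1 := (Subgroup.mem_inf.mp t.1.2).2
            have h2 := (Subgroup.mem_inf.mp t.2.1.2).2
            have h3 := (Subgroup.mem_inf.mp t.2.2.2).2
            rw [MonoidHom.mem_ker] at h1 h2 h3 ⊢
            simp [map_mul, h1, h2, h3]⟩ : f.ker)) := by
  constructor
  · rintro ⟨⟨a, ha⟩, ⟨b, hb⟩, ⟨c, hc⟩⟩ ⟨⟨a', ha'⟩, ⟨b', hb'⟩, ⟨c', hc'⟩⟩ h
    have h' : a * b * c = a' * b' * c' := congrArg Subtype.val h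
    have key : (⟨⟨a, (Subgroup.mem_inf.mp ha).1⟩, ⟨b, (Subgroup.mem_inf.mp hb).1⟩,
        ⟨c, (Subgroup.mem_inf.mp hc).1⟩⟩ : Gm × G0 × Gp) =
        ⟨⟨a', (Subgroup.mem_inf.mp ha').1⟩, ⟨b', (Subgroup.mem_inf.mp hb').1⟩,
        ⟨c', (Subgroup.mem_inf.mp hc').1⟩⟩ := hG.1 h'
    simp only [Prod.mk.injEq, Subtype.mk.injEq] at key
    obtain ⟨e1, e2, e3⟩ := key
    subst e1; subst e2; subst e3; rfl
  · rintro ⟨g, hg⟩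
    obtain ⟨⟨⟨a, ha⟩, ⟨b, hb⟩, ⟨c, hc⟩⟩, habc⟩ := hG.2 g
    simp only at habc
    have hker : f a = 1 ∧ f b = 1 ∧ f c = 1 := by
      have h1 : f a * f b * f c = 1 * 1 * 1 := by
        rw [← map_mul, ← map_mul, habc]
        simpa using hg
      have key : (⟨⟨f a, hfm a ha⟩, ⟨f b, hf0 b hb⟩, ⟨f c, hfp c hc⟩⟩ : Hm × H0 × Hp) =
          ⟨1, 1, 1⟩ := hH.1 (by simpa using h1)
      simp only [Prod.mk.injEq] at key
      exact ⟨congrArg Subtype.val key.1, congrArg Subtype.val key.2.1,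
        congrArg Subtype.val key.2.2⟩
    refine ⟨⟨⟨a, Subgroup.mem_inf.mpr ⟨ha, hker.1⟩⟩,
      ⟨b, Subgroup.mem_inf.mpr ⟨hb, hker.2.1⟩⟩,
      ⟨c, Subgroup.mem_inf.mpr ⟨hc, hker.2.2⟩⟩⟩, ?_⟩
    exact Subtype.ext habc
end

section
/- Let H = H⁻H⁰H⁺ be a triangulation and V an H⁰-representation. Then the restriction of I(V) to B⁻ = H⁻⋊H⁰ is isomorphic to k[H⁻]⊗_k V, where H⁻ acts by the right regular representation on k[H⁻] and trivially on V, and H⁰ acts by conjugation on k[H⁻] and as given on V. In particular, I(V)^{H⁻} ≅ V as H⁰-representations. -/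
open scoped TensorProduct

/-- An abstract (pointwise) triangulation of a group `H`: three subgroups `H⁻, H⁰, H⁺`
such that multiplication `H⁻ × H⁰ × H⁺ → H` is bijective, the products
`B⁻ = H⁻⋊H⁰` and `B⁺ = H⁰⋉H⁺` are semidirect (i.e. `H⁰` normalizes `H⁻` and `H⁺`),
and `H⁻` is finite. -/
structure Triang (H : Type) [Group H] where
  Hm : Subgroup H
  H0 : Subgroup H
  Hp : Subgroup H
  bij : Function.Bijective (fun t : Hm × H0 × Hp => ((t.1 : H) * t.2.1) * t.2.2)
  norm_m : ∀ t ∈ H0, ∀ a ∈ Hm, t * a * t⁻¹ ∈ Hm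
  norm_p : ∀ t ∈ H0, ∀ c ∈ Hp, t * c * t⁻¹ ∈ Hp
  finm : Finite Hm

variable {H : Type} [Group H]

/-- The decomposition `h = h₊h₀h₋` along `H = H⁺H⁰H⁻`: components of `h`. -/
noncomputable def decP (T : Triang H) (h : H) : T.Hp × T.H0 × T.Hm :=
  let t := (Equiv.ofBijective _ T.bij).symm h⁻¹
  (t.2.2⁻¹, t.2.1⁻¹, t.1⁻¹)

/-- The `H⁰`-component `h₀` of `h = h₊h₀h₋`. -/
noncomputable def pi0 (T : Triang H) (h : H) : T.H0 := (decP T h).2.1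

/-- Membership in `B⁺ = H⁺H⁰`. -/
def inBp (T : Triang H) (h : H) : Prop := (decP T h).2.2 = 1

variable {k : Type} [Field k]

/-- A submodule is invariant under a representation. -/
def IsInvt {G V : Type} [Group G] [AddCommGroup V] [Module k V]
    (ρ : Representation k G V) (W : Submodule k V) : Prop :=
  ∀ g : G, ∀ v ∈ W, ρ g v ∈ W

/-- The invariants of a representation. -/
def invAll {G V : Type} [Group G] [AddCommGroup V] [Module k V]
    (ρ : Representation k G V) : Submodule k V where
  carrier := {v | ∀ g, ρ g v = v}
  add_mem' := by intro a b ha hb g; simp only [map_add, ha g, hb g]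
  zero_mem' := by intro g; simp
  smul_mem' := by intro c v hv g; simp only [map_smul, hv g]

/-- `W` is an irreducible subrepresentation. -/
def IsIrredSub {G V : Type} [Group G] [AddCommGroup V] [Module k V]
    (ρ : Representation k G V) (W : Submodule k V) : Prop :=
  IsInvt ρ W ∧ W ≠ ⊥ ∧ ∀ W' ≤ W, IsInvt ρ W' → W' = ⊥ ∨ W' = W

/-- The socle of a representation: the sum of all its irreducible subrepresentations. -/
def socle {G V : Type} [Group G] [AddCommGroup V] [Module k V]
    (ρ : Representation k G V) : Submodule k V :=
  sSup {W | IsIrredSub ρ W}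

/-- A representation is irreducible. -/
def IsIrred {G V : Type} [Group G] [AddCommGroup V] [Module k V]
    (ρ : Representation k G V) : Prop :=
  Nontrivial V ∧ ∀ W : Submodule k V, IsInvt ρ W → W = ⊥ ∨ W = ⊤

/-- Isomorphism of representations. -/
def RepIso {G V W : Type} [Group G] [AddCommGroup V] [Module k V]
    [AddCommGroup W] [Module k W]
    (ρ : Representation k G V) (σ : Representation k G W) : Prop :=
  ∃ e : V ≃ₗ[k] W, ∀ g v, e (ρ g v) = σ g (e v)

/-- Restriction of a representation to an invariant submodule. -/
def resSub {G V : Type} [Group G] [AddCommGroup V] [Module k V]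
    (ρ : Representation k G V) (W : Submodule k V) (hW : IsInvt ρ W) :
    Representation k G ↥W where
  toFun g :=
    { toFun := fun w => ⟨ρ g w, hW g w w.2⟩
      map_add' := by intro a b; ext; simp
      map_smul' := by intro c a; ext; simp }
  map_one' := by ext w; simp
  map_mul' := by intro a b; ext w; simp

/-- A subgroup is unipotent (over `k`): every nonzero finite dimensional representation
has nonzero invariants. -/
def IsUnipSub (k : Type) [Field k] {H : Type} [Group H] (K : Subgroup H) : Prop :=
  ∀ (M : Type) [AddCommGroup M] [Module k M],
    ∀ σ : Representation k K M, Nontrivial M → FiniteDimensional k M → invAll σ ≠ ⊥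

/-- The underlying space of the induced representation
`I(V) = (j⁺)_*(π⁺)^* V = {f : H → V | f(bg) = π⁺(b)·f(g) for b ∈ B⁺}`. -/
noncomputable def IndCar {V : Type} [AddCommGroup V] [Module k V] (T : Triang H)
    (ρ : Representation k T.H0 V) : Submodule k (H → V) where
  carrier := {f | ∀ b g : H, inBp T b → f (b * g) = ρ (pi0 T b) (f g)}
  add_mem' := by
    intro f g hf hg b x hb
    simp only [Pi.add_apply, hf b x hb, hg b x hb, map_add]
  zero_mem' := by intro b x hb; simp
  smul_mem' := by
    intro c f hf b x hb
    simp only [Pi.smul_apply, hf b x hb, map_smul]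

/-- The induced representation `I(V)`, with `H` acting by right translation. -/
noncomputable def IndRep {V : Type} [AddCommGroup V] [Module k V] (T : Triang H)
    (ρ : Representation k T.H0 V) : Representation k H ↥(IndCar T ρ) where
  toFun h :=
    { toFun := fun f => ⟨fun g => (f : H → V) (g * h), by
        intro b x hb
        show (f : H → V) ((b * x) * h) = _
        rw [mul_assoc]
        exact f.2 b (x * h) hb⟩
      map_add' := by intro a b; refine Subtype.ext (funext fun g => ?_); rfl
      map_smul' := by intro c a; refine Subtype.ext (funext fun g => ?_); rfl }
  map_one' := by
    refine LinearMap.ext fun f => Subtype.ext (funext fun g => ?_)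
    simp
  map_mul' := by
    intro a b
    refine LinearMap.ext fun f => Subtype.ext (funext fun g => ?_)
    simp [mul_assoc]

section Aux

lemma decP_eq (T : Triang H) (c : T.Hp) (t : T.H0) (a : T.Hm) :
    decP T ((c : H) * t * a) = (c, t, a) := by
  have key : (Equiv.ofBijective _ T.bij).symm (((c : H) * t * a))⁻¹ = (a⁻¹, t⁻¹, c⁻¹) := by
    rw [Equiv.symm_apply_eq]
    show ((c : H) * t * a)⁻¹ = (((a⁻¹ : T.Hm) : H) * ((t⁻¹ : T.H0) : H)) * ((c⁻¹ : T.Hp) : H)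
    push_cast
    group
  unfold decP
  rw [key]
  simp

lemma decP_spec (T : Triang H) (h : H) :
    ((decP T h).1 : H) * (decP T h).2.1 * (decP T h).2.2 = h := by
  have key := (Equiv.ofBijective _ T.bij).apply_symm_apply h⁻¹
  set u := (Equiv.ofBijective _ T.bij).symm h⁻¹ with hu
  have key' : ((u.1 : H) * u.2.1) * u.2.2 = h⁻¹ := key
  have kh : (((u.1 : H) * u.2.1) * u.2.2)⁻¹ = h := by rw [key', inv_inv]
  show ((u.2.2⁻¹ : T.Hp) : H) * ((u.2.1⁻¹ : T.H0) : H) * ((u.1⁻¹ : T.Hm) : H) = h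
  rw [← kh]
  push_cast
  group

lemma decP_mem_m (T : Triang H) (a : T.Hm) : decP T (a : H) = (1, 1, a) := by
  have := decP_eq T 1 1 a
  simpa using this

lemma decP_one (T : Triang H) : decP T (1 : H) = (1, 1, 1) := by
  simpa using decP_mem_m T 1

lemma decP_bt (T : Triang H) (c : T.Hp) (t : T.H0) :
    decP T ((c : H) * t) = (c, t, 1) := by
  have := decP_eq T c t 1
  simpa using this

lemma of_inBp (T : Triang H) {b : H} (hb : inBp T b) :
    b = ((decP T b).1 : H) * (pi0 T b : H) := by
  conv_lhs => rw [← decP_spec T b]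
  unfold inBp at hb
  rw [hb]
  simp [pi0]

lemma decP_bmul (T : Triang H) (c : T.Hp) (t : T.H0) (g : H) :
    decP T ((c : H) * t * g) =
      (c * ⟨(t : H) * (decP T g).1 * (t : H)⁻¹,
          T.norm_p t t.2 _ (decP T g).1.2⟩,
        t * (decP T g).2.1, (decP T g).2.2) := by
  have hg := decP_spec T g
  have key : (c : H) * t * g =
      ((c * ⟨(t : H) * (decP T g).1 * (t : H)⁻¹, T.norm_p t t.2 _ (decP T g).1.2⟩ : T.Hp) : H)
        * ((t * (decP T g).2.1 : T.H0) : H) * ((decP T g).2.2 : H) := by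
    show (c : H) * t * g = ((c : H) * ((t : H) * (decP T g).1 * (t : H)⁻¹))
        * ((t : H) * (decP T g).2.1) * ((decP T g).2.2 : H)
    conv_lhs => rw [← hg]
    group
  rw [key, decP_eq]

lemma decP_mul_m (T : Triang H) (h : H) (a : T.Hm) :
    decP T (h * a) = ((decP T h).1, (decP T h).2.1, (decP T h).2.2 * a) := by
  have hh := decP_spec T h
  have : h * a = ((decP T h).1 : H) * ((decP T h).2.1 : H)
      * (((decP T h).2.2 * a : T.Hm) : H) := by
    push_cast
    rw [← mul_assoc, hh]
  rw [this, decP_eq]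

variable {V : Type} [AddCommGroup V] [Module k V]

lemma indCar_eval (T : Triang H) (ρ0 : Representation k T.H0 V)
    (f : ↥(IndCar T ρ0)) (h : H) :
    (f : H → V) h = ρ0 (pi0 T h) ((f : H → V) ((decP T h).2.2 : H)) := by
  have hb : inBp T (((decP T h).1 : H) * ((decP T h).2.1 : H)) := by
    show (decP T _).2.2 = 1
    rw [decP_bt]
  have := f.2 (((decP T h).1 : H) * ((decP T h).2.1 : H)) ((decP T h).2.2 : H) hb
  rw [decP_spec] at this
  have hpi : pi0 T (((decP T h).1 : H) * ((decP T h).2.1 : H)) = pi0 T h := by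
    show (decP T _).2.1 = (decP T h).2.1
    rw [decP_bt]
  rw [this, hpi]

lemma mem_indCar_of (T : Triang H) (ρ0 : Representation k T.H0 V)
    (φ : T.Hm → V) :
    (fun h => ρ0 (pi0 T h) (φ (decP T h).2.2)) ∈ IndCar T ρ0 := by
  intro b g hb
  have hbe := of_inBp T hb
  have h1 : pi0 T (b * g) = pi0 T b * pi0 T g := by
    conv_lhs => rw [hbe]
    show (decP T _).2.1 = _
    rw [decP_bmul]
    rfl
  have h2 : (decP T (b * g)).2.2 = (decP T g).2.2 := by
    conv_lhs => rw [hbe]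
    rw [decP_bmul]
  show ρ0 (pi0 T (b * g)) (φ (decP T (b * g)).2.2)
      = ρ0 (pi0 T b) (ρ0 (pi0 T g) (φ (decP T g).2.2))
  rw [h1, h2, map_mul]
  rfl

end Aux

set_option synthInstance.maxHeartbeats 1000000 in
set_option maxHeartbeats 2000000 in
/-- Let `H = H⁻H⁰H⁺` be a triangulation and `V` an `H⁰`-representation.
The restriction of `I(V)` to `B⁻ = H⁻⋊H⁰` is isomorphic to `k[H⁻] ⊗ V` (since `H⁻` is
finite, `k[H⁻] ⊗ V` is the space of functions `H⁻ → V`), where `H⁻` acts by the right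
regular representation on `k[H⁻]` and trivially on `V`, and `H⁰` acts by conjugation
on `k[H⁻]` and as given on `V`.  In particular `I(V)^{H⁻} ≅ V` as `H⁰`-representations. -/
theorem stmt_5 (T : Triang H)
    (V : Type) [AddCommGroup V] [Module k V] [FiniteDimensional k V]
    (ρ0 : Representation k T.H0 V) :
    ∃ e : ↥(IndCar T ρ0) ≃ₗ[k] (T.Hm → V),
      (∀ (a : T.Hm) (f : ↥(IndCar T ρ0)) (x : T.Hm),
        e (IndRep T ρ0 ↑a f) x = e f (x * a)) ∧
      (∀ (t : T.H0) (f : ↥(IndCar T ρ0)) (x y : T.Hm),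
        (y : H) = ((t : H))⁻¹ * ↑x * ↑t →
          e (IndRep T ρ0 ↑t f) x = ρ0 t (e f y)) ∧
      (∃ e0 : ↥(invAll ((IndRep T ρ0).comp T.Hm.subtype)) ≃ₗ[k] V,
        ∀ (t : T.H0) (w w' : ↥(invAll ((IndRep T ρ0).comp T.Hm.subtype))),
          (w' : ↥(IndCar T ρ0)) = IndRep T ρ0 ↑t ↑w → e0 w' = ρ0 t (e0 w)) := by
  have hpi0t : ∀ t : T.H0, decP T (t : H) = (1, t, 1) := by
    intro t
    have := decP_bt T 1 t
    simpa using this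
  have hinBpt : ∀ t : T.H0, inBp T (t : H) := by
    intro t
    show (decP T _).2.2 = 1
    rw [hpi0t]
  refine ⟨{ toFun := fun f x => (f : H → V) (x : H)
            map_add' := by intro a b; rfl
            map_smul' := by intro c a; rfl
            invFun := fun φ => ⟨fun h => ρ0 (pi0 T h) (φ (decP T h).2.2),
              mem_indCar_of T ρ0 φ⟩
            left_inv := by
              intro f
              refine Subtype.ext (funext fun h => ?_)
              exact (indCar_eval T ρ0 f h).symm
            right_inv := by
              intro φ
              funext x
              show ρ0 (pi0 T (x : H)) (φ (decP T (x : H)).2.2) = φ x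
              simp [pi0, decP_mem_m] }, ?_, ?_, ?_⟩
  · intro a f x
    rfl
  · intro t f x y hy
    show (f : H → V) ((x : H) * (t : H)) = ρ0 t ((f : H → V) (y : H))
    have hxy : (x : H) * (t : H) = (t : H) * (y : H) := by
      rw [hy]; group
    rw [hxy, f.2 (t : H) (y : H) (hinBpt t)]
    have h1 : pi0 T (t : H) = t := by
      show (decP T _).2.1 = t
      rw [hpi0t]
    rw [h1]
  · have hinv : ∀ w : ↥(invAll ((IndRep T ρ0).comp T.Hm.subtype)),
        ∀ (a : T.Hm) (g : H),
          ((w : ↥(IndCar T ρ0)) : H → V) (g * (a : H)) =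
            ((w : ↥(IndCar T ρ0)) : H → V) g := by
      intro w a g
      have := congrFun (Subtype.ext_iff.mp (w.2 a)) g
      exact this
    refine ⟨{ toFun := fun w => ((w : ↥(IndCar T ρ0)) : H → V) 1
              map_add' := by intro a b; rfl
              map_smul' := by intro c a; rfl
              invFun := fun v => ⟨⟨fun h => ρ0 (pi0 T h) v,
                  mem_indCar_of T ρ0 (fun _ => v)⟩, by
                intro a
                refine Subtype.ext (funext fun h => ?_)
                show ρ0 (pi0 T (h * (a : H))) v = ρ0 (pi0 T h) v
                unfold pi0
                rw [decP_mul_m]⟩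
              left_inv := by
                intro w
                refine Subtype.ext (Subtype.ext (funext fun h => ?_))
                show ρ0 (pi0 T h) (((w : ↥(IndCar T ρ0)) : H → V) 1) =
                  ((w : ↥(IndCar T ρ0)) : H → V) h
                rw [indCar_eval T ρ0 (w : ↥(IndCar T ρ0)) h]
                congr 1
                have := hinv w (decP T h).2.2 1
                rw [one_mul] at this
                exact this.symm
              right_inv := by
                intro v
                show ρ0 (pi0 T (1 : H)) v = v
                simp [pi0, decP_one] }, ?_⟩
    intro t w w' hw
    show ((w' : ↥(IndCar T ρ0)) : H → V) 1 = ρ0 t (((w : ↥(IndCar T ρ0)) : H → V) 1)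
    rw [hw]
    show ((w : ↥(IndCar T ρ0)) : H → V) (1 * (t : H)) = _
    rw [one_mul, indCar_eval T ρ0 (w : ↥(IndCar T ρ0)) (t : H)]
    have h1 : pi0 T (t : H) = t := by
      show (decP T _).2.1 = t
      rw [hpi0t]
    rw [h1, hpi0t]
    norm_num
end

section
/- In the Laurent polynomial ring Z[t_1^{±1},...,t_n^{±1}], let ψ^p be the ring endomorphism with ψ^p(t_i) = t_i^p, let δ = ∏_{i=1}^n (t_i − 1), and let U_r = ∏_{i=1}^n (t_i^{p^r}−1)/(t_i−1). Then the kernel of the map Z[t^{±}]⊕Z[t^{±}] → Z[t^{±}], (b,a) ↦ U_r·b + ψ^p(a), equals {(δ·ψ^p(a), −ψ^{p,(r-1)}(δ)·a) : a ∈ Z[t^{±}]}, where ψ^{p,(r-1)} denotes the (r−1)-fold iterate of ψ^p. -/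
/-!
Write `t_i` for the generators of `ℤ[ℤⁿ]` and `ψ` for `t ↦ t ^ p`. Since `U_r δ = ψ^r δ` and
`U_r` is a non-zero-divisor, the whole content is that `U_r b + ψ a = 0` forces
`ψ^(r-1) δ = ∏ (t_i ^ p^(r-1) - 1)` to divide `a`.

Fix `i` and reduce modulo `t_i ^ p^r = 1`, i.e. pass to `ℤ[ℤⁿ ⧸ ⟨p^r e_i⟩]`. There `t_i - 1`
kills `U_r`, so the image of `U_r b` is invariant under multiplication by `t_i`; on the other
hand it equals minus the image of `ψ a`, which is supported on `p ℤⁿ + ⟨p^r e_i⟩ ∌ e_i`. An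
element invariant under a translation that leaves its support has to vanish. As
`v ↦ p v` is injective from `ℤⁿ ⧸ ⟨p^(r-1) e_i⟩` to `ℤⁿ ⧸ ⟨p^r e_i⟩`, `a` vanishes in
`ℤ[ℤⁿ ⧸ ⟨p^(r-1) e_i⟩]`, which is to say that `t_i ^ p^(r-1) - 1` divides `a`.

These divisibilities for the various `i` combine to divisibility by the product, because
`t_j ^ M - 1` remains a non-zero-divisor modulo `t_i ^ M - 1` for `j ≠ i`: in a group ring,
`g - 1` is a non-zero-divisor as soon as `g` has infinite order, since an element invariant
under `g` would have infinite support.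
-/

open nonZeroDivisors

namespace AddMonoidAlgebra

variable {k G G' : Type*} [CommRing k] [AddCommGroup G] [AddCommGroup G']

lemma coeff_add_nsmul_of_single_mul_eq_self {h : G} {x : k[G]} (hx : single h 1 * x = x)
    (γ : G) (m : ℕ) : x.coeff (γ + m • h) = x.coeff γ := by
  have hshift : ∀ γ, x.coeff (γ + h) = x.coeff γ := fun γ => by
    conv_lhs => rw [← hx]
    rw [coeff_single_mul_apply, one_mul, neg_add_cancel_comm_assoc]
  induction m with
  | zero => simp
  | succ m ih => rw [succ_nsmul, ← add_assoc, hshift, ih]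

lemma eq_zero_of_single_mul_eq_self_of_notMem {K : AddSubgroup G} {h : G} (hh : h ∉ K)
    {x : k[G]} (hK : ∀ γ ∉ K, x.coeff γ = 0) (hx : single h 1 * x = x) : x = 0 := by
  ext γ
  by_cases hγ : γ ∈ K
  · rw [← one_nsmul h] at hh
    rw [← coeff_add_nsmul_of_single_mul_eq_self hx γ 1]
    exact hK _ fun hγh => hh (by simpa using K.sub_mem hγh hγ)
  · exact hK γ hγ

lemma eq_zero_of_single_mul_eq_self_of_not_isOfFinAddOrder {h : G} (hh : ¬IsOfFinAddOrder h)
    {x : k[G]} (hx : single h 1 * x = x) : x = 0 := by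
  by_contra hne
  obtain ⟨γ, hγ⟩ : ∃ γ, x.coeff γ ≠ 0 := by
    by_contra! H
    exact hne (AddMonoidAlgebra.ext (Finsupp.ext H))
  have hmem : ∀ m : ℕ, γ + m • h ∈ (x.coeff.support : Set G) := fun m => by
    simpa [coeff_add_nsmul_of_single_mul_eq_self hx] using hγ
  have hinj : Function.Injective fun m : ℕ => γ + m • h :=
    (add_right_injective γ).comp (injective_nsmul_iff_not_isOfFinAddOrder.mpr hh)
  exact Set.infinite_of_injective_forall_mem hinj hmem x.coeff.support.finite_toSet

lemma single_sub_one_mem_nonZeroDivisors {h : G} (hh : ¬IsOfFinAddOrder h) :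
    single h (1 : k) - 1 ∈ k[G]⁰ :=
  mem_nonZeroDivisors_iff_left.mpr fun x hx =>
    eq_zero_of_single_mul_eq_self_of_not_isOfFinAddOrder hh
      (by rwa [sub_mul, one_mul, sub_eq_zero] at hx)

lemma single_sub_one_dvd_single_zsmul_sub_one (g : G) (m : ℤ) :
    single g (1 : k) - 1 ∣ single (m • g) 1 - 1 := by
  have hnat : ∀ m : ℕ, single g (1 : k) - 1 ∣ single ((m : ℤ) • g) 1 - 1 := fun m => by
    simpa [single_pow] using sub_one_dvd_pow_sub_one (single g (1 : k)) m
  obtain ⟨m, rfl | rfl⟩ := Int.eq_nat_or_neg m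
  · exact hnat m
  · have : single ((-m : ℤ) • g) (1 : k) - 1 =
        -single ((-m : ℤ) • g) 1 * (single ((m : ℤ) • g) 1 - 1) := by
      rw [neg_mul, mul_sub, single_mul_single, mul_one, mul_one, ← add_smul, neg_add_cancel,
        zero_smul, ← one_def]
      ring
    rw [this]
    exact (hnat m).mul_left _

lemma single_sub_one_dvd_of_mapDomain_eq_zero {f : G →+ G'} {g : G}
    (hf : f.ker ≤ AddSubgroup.zmultiples g) {x : k[G]} (hx : mapDomain f x = 0) :
    single g (1 : k) - 1 ∣ x := by
  -- `invFun f ∘ f` moves each point within its fibre, a coset of `ker f`.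
  suffices h : ∀ y : k[G],
      single g (1 : k) - 1 ∣ y - mapDomain (Function.invFun f) (mapDomain f y) by
    simpa [hx] using h x
  intro y
  induction y using induction_linear with
  | zero => simp
  | add y z hy hz =>
    simpa only [mapDomain_add, add_sub_add_comm] using hy.add hz
  | single v c =>
    have hker : v - Function.invFun f (f v) ∈ f.ker := by
      rw [AddMonoidHom.mem_ker, map_sub, Function.invFun_eq (f := f) ⟨v, rfl⟩, sub_self]
    obtain ⟨m, hm⟩ := AddSubgroup.mem_zmultiples_iff.mp (hf hker)
    have : single v c - single (Function.invFun f (f v)) c =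
        single (Function.invFun f (f v)) c * (single (m • g) 1 - 1) := by
      rw [mul_sub, single_mul_single, mul_one, mul_one, hm, add_sub_cancel]
    rw [mapDomain_single, mapDomain_single, this]
    exact (single_sub_one_dvd_single_zsmul_sub_one g m).mul_left _

lemma iterate_mapDomainRingHom_nsmul (p m : ℕ) :
    (⇑(mapDomainRingHom k (nsmulAddMonoidHom p : G →+ G)))^[m] =
      mapDomainRingHom k (nsmulAddMonoidHom (p ^ m)) := by
  induction m with
  | zero =>
    rw [pow_zero, show nsmulAddMonoidHom 1 = AddMonoidHom.id G from AddMonoidHom.ext one_nsmul,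
      mapDomainRingHom_id]
    rfl
  | succ m ih =>
    rw [Function.iterate_succ', ih, ← RingHom.coe_comp, ← mapDomainRingHom_comp]
    congr 2
    ext v
    simp [pow_succ', mul_nsmul']

lemma mapDomainRingHom_mk'_single_sub_one (g : G) :
    mapDomainRingHom k (QuotientAddGroup.mk' (AddSubgroup.zmultiples g)) (single g 1 - 1) = 0 := by
  rw [map_sub, map_one, mapDomainRingHom_apply, mapDomain_single, QuotientAddGroup.mk'_apply,
    (QuotientAddGroup.eq_zero_iff g).mpr (AddSubgroup.mem_zmultiples g), ← one_def, sub_self]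

lemma single_sub_one_dvd_of_dvd_mul {g : G} {c x : k[G]}
    (hc : mapDomainRingHom k (QuotientAddGroup.mk' (AddSubgroup.zmultiples g)) c ∈
      k[G ⧸ AddSubgroup.zmultiples g]⁰)
    (h : single g (1 : k) - 1 ∣ c * x) : single g (1 : k) - 1 ∣ x := by
  set φ := mapDomainRingHom k (QuotientAddGroup.mk' (AddSubgroup.zmultiples g))
  have hφx : φ x = 0 := by
    obtain ⟨d, hd⟩ := h
    have := congrArg φ hd
    rw [map_mul, map_mul, mapDomainRingHom_mk'_single_sub_one, zero_mul] at this
    exact (mem_nonZeroDivisors_iff_left.mp hc) _ this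
  exact single_sub_one_dvd_of_mapDomain_eq_zero (QuotientAddGroup.ker_mk' _).le hφx

lemma single_sub_one_dvd_of_mul_add_mapDomain_nsmul_eq_zero [IsAddTorsionFree G] {p : ℕ}
    (hp : p ≠ 0) {g h : G}
    (hh : h ∉ (nsmulAddMonoidHom p : G →+ G).range ⊔ AddSubgroup.zmultiples (p • g))
    {u b a : k[G]} (hu : single (p • g) (1 : k) - 1 ∣ (single h 1 - 1) * u)
    (hab : u * b + mapDomainRingHom k (nsmulAddMonoidHom p) a = 0) :
    single g (1 : k) - 1 ∣ a := by
  set H := AddSubgroup.zmultiples (p • g)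
  set φ := mapDomainRingHom k (QuotientAddGroup.mk' H)
  set f := (QuotientAddGroup.mk' H).comp (nsmulAddMonoidHom p : G →+ G)
  have hker : f.ker ≤ AddSubgroup.zmultiples g := by
    intro v hv
    obtain ⟨m, hm⟩ := AddSubgroup.mem_zmultiples_iff.mp
      ((QuotientAddGroup.eq_zero_iff _).mp (AddMonoidHom.mem_ker.mp hv))
    refine AddSubgroup.mem_zmultiples_iff.mpr ⟨m, nsmul_right_injective hp ?_⟩
    simpa [smul_comm m p g] using hm
  have hφu : single (QuotientAddGroup.mk' H h) 1 * φ u = φ u := by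
    obtain ⟨d, hd⟩ := hu
    have := congrArg φ hd
    rwa [map_mul, map_mul, mapDomainRingHom_mk'_single_sub_one, zero_mul, map_sub, map_one,
      sub_mul, one_mul, sub_eq_zero, mapDomainRingHom_apply, mapDomain_single] at this
  have hφb : φ (u * b) = -mapDomain f a := by
    rw [eq_neg_of_add_eq_zero_left hab, map_neg, ← RingHom.comp_apply, ← mapDomainRingHom_comp,
      mapDomainRingHom_apply]
  have hh' : QuotientAddGroup.mk' H h ∉ f.range := by
    rintro ⟨v, hv⟩
    apply hh
    rw [AddSubgroup.mem_sup]
    obtain ⟨m, hm⟩ := AddSubgroup.mem_zmultiples_iff.mp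
      ((QuotientAddGroup.eq_iff_sub_mem).mp hv)
    exact ⟨p • v, ⟨v, rfl⟩, _, (AddSubgroup.mem_zmultiples_iff.mpr ⟨-m, rfl⟩), by simp [hm]⟩
  have hφb_zero : φ (u * b) = 0 :=
    eq_zero_of_single_mul_eq_self_of_notMem hh'
      (fun γ hγ => by
        rw [hφb, coeff_neg, coeff_mapDomain, Finsupp.neg_apply,
          Finsupp.mapDomain_of_notMem_range _ _ hγ, neg_zero])
      (by rw [map_mul, ← mul_assoc, hφu])
  rw [hφb, neg_eq_zero] at hφb_zero
  exact single_sub_one_dvd_of_mapDomain_eq_zero hker hφb_zero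

section FreeAbelian

variable {ι : Type*} [DecidableEq ι]

lemma not_isOfFinAddOrder_mk_single {i j : ι} (hij : j ≠ i) {M : ℤ} (hM : M ≠ 0) :
    ¬IsOfFinAddOrder (QuotientAddGroup.mk' (AddSubgroup.zmultiples (Pi.single i M))
      (Pi.single j M : ι → ℤ)) := by
  rintro hfin
  obtain ⟨N, hN, hNM⟩ := isOfFinAddOrder_iff_nsmul_eq_zero.mp hfin
  rw [← map_nsmul, QuotientAddGroup.mk'_apply, QuotientAddGroup.eq_zero_iff] at hNM
  obtain ⟨l, hl⟩ := AddSubgroup.mem_zmultiples_iff.mp hNM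
  have := congrFun hl j
  simp [hij, hM, hN.ne'] at this

lemma single_one_notMem_range_nsmul_sup_zmultiples {p : ℕ} (hp : p ≠ 1) (i : ι) (m : ℤ) :
    (Pi.single i 1 : ι → ℤ) ∉ (nsmulAddMonoidHom p : (ι → ℤ) →+ ι → ℤ).range ⊔
      AddSubgroup.zmultiples (p • Pi.single i m) := by
  rw [AddSubgroup.mem_sup]
  rintro ⟨_, ⟨v, rfl⟩, _, hz, hsum⟩
  obtain ⟨l, rfl⟩ := AddSubgroup.mem_zmultiples_iff.mp hz
  have := congrFun hsum i
  simp only [Pi.add_apply, nsmulAddMonoidHom_apply, Pi.smul_apply, Pi.single_eq_same] at this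
  apply hp
  have hdvd : (p : ℤ) ∣ 1 := ⟨v i + l * m, by rw [← this]; simp; ring⟩
  exact_mod_cast Int.eq_one_of_dvd_one (by positivity) hdvd

variable {k : Type*} [CommRing k]

lemma single_single_one_pow (i : ι) (m : ℕ) :
    single (Pi.single i 1 : ι → ℤ) (1 : k) ^ m = single (Pi.single i (m : ℤ)) 1 := by
  rw [single_pow, one_pow, ← Pi.single_smul, nsmul_one]

variable [Fintype ι]

lemma mapDomainRingHom_nsmul_prod_single_sub_one (m : ℕ) :
    mapDomainRingHom k (nsmulAddMonoidHom m) (∏ i, (single (Pi.single i 1 : ι → ℤ) (1 : k) - 1)) =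
      ∏ i, (single (Pi.single i (m : ℤ)) (1 : k) - 1) := by
  simp only [map_prod, map_sub, map_one, mapDomainRingHom_apply, mapDomain_single,
    nsmulAddMonoidHom_apply, ← Pi.single_smul, nsmul_one]

lemma prod_geom_sum_mul_prod_sub_one (N : ℕ) :
    (∏ i, ∑ j ∈ Finset.range N, single (Pi.single i 1 : ι → ℤ) (1 : k) ^ j) *
        ∏ i, (single (Pi.single i 1 : ι → ℤ) (1 : k) - 1) =
      ∏ i, (single (Pi.single i (N : ℤ)) (1 : k) - 1) := by
  rw [← Finset.prod_mul_distrib]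
  simp_rw [geom_sum_mul, single_single_one_pow]

lemma prod_geom_sum_mem_nonZeroDivisors {N : ℕ} (hN : N ≠ 0) :
    ∏ i, ∑ j ∈ Finset.range N, single (Pi.single i 1 : ι → ℤ) (1 : k) ^ j ∈ k[ι → ℤ]⁰ := by
  refine ((mul_mem_nonZeroDivisors
    (b := ∏ i, (single (Pi.single i 1 : ι → ℤ) (1 : k) - 1))).mp ?_).1
  rw [prod_geom_sum_mul_prod_sub_one]
  exact prod_mem_nonZeroDivisors_of_mem_nonZeroDivisors fun i _ =>
    single_sub_one_mem_nonZeroDivisors (not_isOfFinAddOrder_of_isAddTorsionFree (by simp [hN]))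

lemma prod_single_sub_one_dvd {M : ℤ} (hM : M ≠ 0) {a : k[ι → ℤ]}
    (h : ∀ i, single (Pi.single i M) (1 : k) - 1 ∣ a) :
    ∏ i, (single (Pi.single i M) (1 : k) - 1) ∣ a := by
  suffices ∀ S : Finset ι, ∏ i ∈ S, (single (Pi.single i M) (1 : k) - 1) ∣ a from this _
  intro S
  induction S using Finset.induction_on with
  | empty => simp
  | insert i S hiS ih =>
    obtain ⟨c, hc⟩ := ih
    have hi := h i
    rw [hc] at hi
    rw [Finset.prod_insert hiS, hc, mul_comm]
    refine mul_dvd_mul_left _ (single_sub_one_dvd_of_dvd_mul ?_ hi)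
    rw [map_prod]
    refine prod_mem_nonZeroDivisors_of_mem_nonZeroDivisors fun j hj => ?_
    rw [map_sub, map_one, mapDomainRingHom_apply, mapDomain_single]
    exact single_sub_one_mem_nonZeroDivisors
      (not_isOfFinAddOrder_mk_single (ne_of_mem_of_not_mem hj hiS) hM)

lemma prod_single_sub_one_dvd_of_prod_geom_sum_mul_add_eq_zero {p : ℕ} (hp : p.Prime) (r : ℕ)
    {b a : k[ι → ℤ]}
    (h : (∏ i, ∑ j ∈ Finset.range (p ^ (r + 1)), single (Pi.single i 1 : ι → ℤ) (1 : k) ^ j) * b +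
      mapDomainRingHom k (nsmulAddMonoidHom p) a = 0) :
    ∏ i, (single (Pi.single i ((p ^ r : ℕ) : ℤ)) (1 : k) - 1) ∣ a := by
  refine prod_single_sub_one_dvd (by simp [hp.ne_zero]) fun i => ?_
  refine single_sub_one_dvd_of_mul_add_mapDomain_nsmul_eq_zero hp.ne_zero
    (single_one_notMem_range_nsmul_sup_zmultiples hp.ne_one i _) ?_ h
  rw [← Pi.single_smul, nsmul_eq_mul, ← Nat.cast_mul, ← pow_succ', ← single_single_one_pow,
    ← mul_geom_sum]
  exact mul_dvd_mul_left _ (Finset.dvd_prod_of_mem _ (Finset.mem_univ i))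

end FreeAbelian

end AddMonoidAlgebra

open AddMonoidAlgebra

theorem stmt_16_general (p : ℕ) (hp : p.Prime) (n r : ℕ) (hr : 1 ≤ r)
    (ψ : AddMonoidAlgebra ℤ (Fin n → ℤ) →+* AddMonoidAlgebra ℤ (Fin n → ℤ))
    (hψ : ∀ (a : Fin n → ℤ) (b : ℤ),
      ψ (AddMonoidAlgebra.single a b) = AddMonoidAlgebra.single (p • a) b)
    (t : Fin n → AddMonoidAlgebra ℤ (Fin n → ℤ))
    (ht : ∀ i, t i = AddMonoidAlgebra.single (Pi.single i 1) 1)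
    (δ Ur : AddMonoidAlgebra ℤ (Fin n → ℤ))
    (hδ : δ = ∏ i, (t i - 1))
    (hUr : Ur = ∏ i, ∑ a ∈ Finset.range (p ^ r), t i ^ a) :
    ∀ b a, Ur * b + ψ a = 0 ↔ ∃ c, b = δ * ψ c ∧ a = -((⇑ψ)^[r - 1] δ * c) := by
  obtain ⟨r, rfl⟩ := Nat.exists_eq_add_of_le' hr
  obtain rfl : t = fun i => single (Pi.single i 1) 1 := funext ht
  have hψ' : ψ = mapDomainRingHom ℤ (nsmulAddMonoidHom p) :=
    ringHom_ext (fun c => by simp [hψ]) (fun v => by simp [hψ])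
  have hψ_iterate : ∀ m, ψ^[m] δ = ∏ i, (single (Pi.single i ((p ^ m : ℕ) : ℤ)) 1 - 1) :=
    fun m => by rw [hψ', iterate_mapDomainRingHom_nsmul, hδ,
      mapDomainRingHom_nsmul_prod_single_sub_one]
  have hUrδ : Ur * δ = ψ^[r + 1] δ := by
    rw [hψ_iterate, hUr, hδ, prod_geom_sum_mul_prod_sub_one]
  rw [Nat.add_sub_cancel]
  intro b a
  constructor
  · intro hab
    obtain ⟨d, hd⟩ :=
      prod_single_sub_one_dvd_of_prod_geom_sum_mul_add_eq_zero hp r (hUr ▸ hψ' ▸ hab)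
    rw [← hψ_iterate] at hd
    have hUr_mem := hUr ▸ prod_geom_sum_mem_nonZeroDivisors (pow_ne_zero (r + 1) hp.ne_zero)
    refine ⟨-d, (mul_cancel_left_mem_nonZeroDivisors hUr_mem).mp ?_, by rw [hd]; ring⟩
    rw [eq_neg_of_add_eq_zero_left hab, hd, map_mul, map_neg, ← mul_assoc, hUrδ,
      Function.iterate_succ_apply']
    ring
  · rintro ⟨c, rfl, rfl⟩
    rw [map_neg, map_mul, ← mul_assoc, hUrδ, Function.iterate_succ_apply']
    ring

/-- In the Laurent polynomial ring
`ℤ[X(T)] = ℤ[t_1^{±1},...,t_n^{±1}]` (realized as `AddMonoidAlgebra ℤ (Fin n → ℤ)`),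
with `ψ^p` the ring endomorphism `t_i ↦ t_i^p`, `δ = ∏ (t_i - 1)` and
`U_r = ∏ (t_i^{p^r}-1)/(t_i-1) = ∏ (1 + t_i + ... + t_i^{p^r-1})`, the kernel of
`(b,a) ↦ U_r·b + ψ^p(a)` consists exactly of the pairs
`(δ·ψ^p(c), −ψ^{p,(r-1)}(δ)·c)` for `c ∈ ℤ[X(T)]`. -/
theorem stmt_16 (p : ℕ) (hp : p.Prime) (n r : ℕ) (hn : 1 ≤ n) (hr : 1 ≤ r)
    (ψ : AddMonoidAlgebra ℤ (Fin n → ℤ) →+* AddMonoidAlgebra ℤ (Fin n → ℤ))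
    (hψ : ∀ (a : Fin n → ℤ) (b : ℤ),
      ψ (AddMonoidAlgebra.single a b) = AddMonoidAlgebra.single (p • a) b)
    (t : Fin n → AddMonoidAlgebra ℤ (Fin n → ℤ))
    (ht : ∀ i, t i = AddMonoidAlgebra.single (Pi.single i 1) 1)
    (δ Ur : AddMonoidAlgebra ℤ (Fin n → ℤ))
    (hδ : δ = ∏ i, (t i - 1))
    (hUr : Ur = ∏ i, ∑ a ∈ Finset.range (p ^ r), t i ^ a) :
    ∀ b a, Ur * b + ψ a = 0 ↔ ∃ c, b = δ * ψ c ∧ a = -((⇑ψ)^[r - 1] δ * c) :=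
  stmt_16_general p hp n r hr ψ hψ t ht δ Ur hδ hUr
end

section
/- In the Laurent polynomial ring Z[t_1^{±1},...,t_n^{±1}], for each 1 ≤ i ≤ n the intersection of the principal ideal generated by (t_i^p−1)/(t_i−1) with the subring Z[t_1^{±p},...,t_n^{±p}] equals the ideal of Z[t_1^{±p},...,t_n^{±p}] generated by t_i^p − 1. Consequently, Z[t_1^{±p},...,t_n^{±p}] ∩ U_1·Z[t_1^{±1},...,t_n^{±1}] = (U_1·δ)·Z[t_1^{±p},...,t_n^{±p}], where U_1 = ∏_i (t_i^p−1)/(t_i−1) and δ = ∏_i (t_i−1). -/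
/-!
Write `x = ψ w`. Substituting a primitive `p`-th root of unity `ζ` for `t_i` kills
`1 + t_i + ⋯ + t_i^{p-1}`, while it sends `ψ w` to `ψ` applied to `w` at `t_i = ζ^p = 1`.
Since `ψ` is injective, `(t_i^p - 1)/(t_i - 1) ∣ ψ w` forces `w(t_i = 1) = 0`, i.e.
`t_i - 1 ∣ w`, and then `t_i^p - 1 = ψ (t_i - 1)` divides `ψ w` with a quotient in the image
of `ψ`. For the product: setting `t_j = 1` fixes `t_i - 1` for `j ≠ i`, so in the domain
`ℤ[t^{±1}]` the divisibilities `t_i - 1 ∣ w` combine to `∏ (t_i - 1) ∣ w`, and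
`ψ (∏ (t_i - 1)) = U_1 δ`.
-/

open AddMonoidAlgebra

namespace MvLaurent

variable {R A σ : Type*} [CommRing R] [CommRing A]

variable (R) in
/-- `t_i ↦ t_i ^ p`; its image is `ℤ[t^{±p}]` when `R = ℤ`. -/
noncomputable def expand (p : ℕ) :
    AddMonoidAlgebra R (σ → ℤ) →+* AddMonoidAlgebra R (σ → ℤ) :=
  mapDomainRingHom R (DistribSMul.toAddMonoidHom (σ → ℤ) p)

theorem expand_single (p : ℕ) (v : σ → ℤ) (r : R) :
    expand R p (single v r) = single (p • v) r := by
  simp [expand]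

theorem eq_expand_of_map_single {p : ℕ}
    {ψ : AddMonoidAlgebra R (σ → ℤ) →+* AddMonoidAlgebra R (σ → ℤ)}
    (hψ : ∀ v r, ψ (single v r) = single (p • v) r) : ψ = expand R p :=
  ringHom_ext (fun r => by rw [hψ, expand_single]) (fun v => by rw [hψ, expand_single])

theorem expand_injective {p : ℕ} (hp : p ≠ 0) :
    Function.Injective (expand R p : AddMonoidAlgebra R (σ → ℤ) → _) :=
  mapDomain_injective (smul_right_injective (σ → ℤ) hp)

variable [DecidableEq σ]

noncomputable def X (i : σ) : AddMonoidAlgebra R (σ → ℤ) := single (Pi.single i 1) 1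

/-- The substitution `t_i ↦ ζ`, applying `f` to the coefficients. -/
noncomputable def subst (f : R →+* A) (i : σ) (ζ : Aˣ) :
    AddMonoidAlgebra R (σ → ℤ) →+* AddMonoidAlgebra A (σ → ℤ) :=
  liftNCRingHom (singleZeroRingHom.comp f)
    { toFun := fun v => single (Function.update v.toAdd i 0) ((ζ ^ v.toAdd i : Aˣ) : A)
      map_one' := by simp [one_def]
      map_mul' := fun v w => by
        simp only [toAdd_mul, Pi.add_apply, zpow_add, Units.val_mul, single_mul_single]
        rw [← Function.update_add, add_zero] }
    (fun _ _ => Commute.all _ _)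

theorem subst_single (f : R →+* A) (i : σ) (ζ : Aˣ) (v : σ → ℤ) (r : R) :
    subst f i ζ (single v r) = single (Function.update v i 0) (f r * ((ζ ^ v i : Aˣ) : A)) := by
  simp [subst, liftNCRingHom_single, single_mul_single]

theorem subst_X_self (f : R →+* A) (i : σ) (ζ : Aˣ) :
    subst f i ζ (X i) = single 0 (ζ : A) := by
  simp [X, subst_single, Pi.single, Function.update_idem]

theorem subst_X_of_ne (f : R →+* A) {i j : σ} (h : j ≠ i) (ζ : Aˣ) :
    subst f i ζ (X j) = X j := by
  have hji : (Pi.single j 1 : σ → ℤ) i = 0 := by simp [h]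
  rw [X, subst_single, hji, zpow_zero, Units.val_one, mul_one, map_one,
    Function.update_eq_self_iff.mpr hji.symm, X]

theorem expand_X (p : ℕ) (i : σ) : expand R p (X i) = X i ^ p := by
  simp [X, expand_single, single_pow]

theorem subst_comp_expand (f : R →+* A) (i : σ) (ζ : Aˣ) (p : ℕ) :
    (subst f i ζ).comp (expand R p) = (expand A p).comp (subst f i (ζ ^ p)) := by
  refine ringHom_ext (fun r => ?_) (fun v => ?_) <;>
    simp [expand_single, subst_single, ← Function.update_smul, ← zpow_natCast, ← zpow_mul,
      mul_comm]

theorem subst_one_eq_mapRingHom_comp (f : R →+* A) (i : σ) :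
    subst f i 1 = (mapRingHom (σ → ℤ) f).comp (subst (RingHom.id R) i 1) := by
  refine ringHom_ext (fun r => ?_) (fun v => ?_) <;> simp [subst_single]

theorem X_sub_one_dvd_single_sub_one (i : σ) (k : ℤ) :
    X i - 1 ∣ (single (Pi.single i k) 1 - 1 : AddMonoidAlgebra R (σ → ℤ)) := by
  induction k using Int.induction_on with
  | zero => simp [← one_def]
  | succ k ih =>
    have : (single (Pi.single i (k + 1)) 1 - 1 : AddMonoidAlgebra R (σ → ℤ)) =
        X i * (single (Pi.single i k) 1 - 1) + (X i - 1) := by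
      simp [X, mul_sub, single_mul_single, ← Pi.single_add, add_comm]
    exact this ▸ dvd_add (ih.mul_left _) dvd_rfl
  | pred k ih =>
    have : (single (Pi.single i (-1 + -(k : ℤ))) 1 - 1 : AddMonoidAlgebra R (σ → ℤ)) =
        single (Pi.single i (-1)) 1 * ((single (Pi.single i (-(k : ℤ))) 1 - 1) - (X i - 1)) := by
      simp [X, mul_sub, single_mul_single, ← Pi.single_add, ← one_def]
    rw [sub_eq_neg_add (-(k : ℤ)) 1]
    exact this ▸ (dvd_sub ih dvd_rfl).mul_left _

theorem X_sub_one_dvd_sub_subst (i : σ) (x : AddMonoidAlgebra R (σ → ℤ)) :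
    X i - 1 ∣ x - subst (RingHom.id R) i 1 x := by
  induction x using induction_linear with
  | zero => simp
  | add x y hx hy => simpa [add_sub_add_comm] using dvd_add hx hy
  | single v r =>
    have hv : Function.update v i 0 + Pi.single i (v i) = v := by
      ext j; by_cases hj : j = i <;> simp [hj]
    have : single v r - subst (RingHom.id R) i 1 (single v r) =
        single (Function.update v i 0) r * (single (Pi.single i (v i)) 1 - 1) := by
      simp [subst_single, mul_sub, single_mul_single, hv]
    exact this ▸ (X_sub_one_dvd_single_sub_one i (v i)).mul_left _

theorem X_sub_one_dvd_iff (i : σ) (x : AddMonoidAlgebra R (σ → ℤ)) :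
    X i - 1 ∣ x ↔ subst (RingHom.id R) i 1 x = 0 := by
  constructor
  · rintro ⟨q, rfl⟩
    simp [subst_X_self, ← one_def]
  · intro h
    simpa [h] using X_sub_one_dvd_sub_subst i x

theorem X_sub_one_ne_zero [Nontrivial R] (i : σ) :
    (X i - 1 : AddMonoidAlgebra R (σ → ℤ)) ≠ 0 := by
  rw [sub_ne_zero, X, one_def, Ne, single_left_inj one_ne_zero]
  simp

theorem prod_X_sub_one_dvd [IsDomain R] (s : Finset σ) {x : AddMonoidAlgebra R (σ → ℤ)}
    (hx : ∀ i ∈ s, X i - 1 ∣ x) : ∏ i ∈ s, (X i - 1) ∣ x := by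
  induction s using Finset.induction generalizing x with
  | empty => simp
  | insert i s hi ih =>
    obtain ⟨q, rfl⟩ := hx i (s.mem_insert_self i)
    rw [Finset.prod_insert hi]
    refine mul_dvd_mul_left _ (ih fun j hj => ?_)
    have hij : i ≠ j := fun h => hi (h ▸ hj)
    have hj' := (X_sub_one_dvd_iff j _).mp (hx j (Finset.mem_insert_of_mem hj))
    rw [X_sub_one_dvd_iff]
    simpa [subst_X_of_ne _ hij, X_sub_one_ne_zero] using hj'

theorem subst_geom_sum_X_self [IsDomain A] (f : R →+* A) {p : ℕ} (hp : 1 < p) {ζ : Aˣ}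
    (hζ : IsPrimitiveRoot (ζ : A) p) (i : σ) :
    subst f i ζ (∑ a ∈ Finset.range p, X i ^ a) = 0 := by
  have hC : subst f i ζ (X i) = singleZeroRingHom (ζ : A) := subst_X_self f i ζ
  simp_rw [map_sum, map_pow, hC, ← map_pow, ← map_sum, hζ.geom_sum_eq_zero hp, map_zero]

theorem X_sub_one_dvd_of_geom_sum_dvd_expand [IsDomain A] {f : R →+* A}
    (hf : Function.Injective f) {p : ℕ} (hp : 1 < p) {ζ : Aˣ} (hζ : IsPrimitiveRoot (ζ : A) p)
    (i : σ) {w : AddMonoidAlgebra R (σ → ℤ)} (h : ∑ a ∈ Finset.range p, X i ^ a ∣ expand R p w) :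
    X i - 1 ∣ w := by
  have hζp : ζ ^ p = 1 := Units.ext (by simpa using hζ.pow_eq_one)
  obtain ⟨y, hy⟩ := h
  have hw : expand A p (mapRingHom (σ → ℤ) f (subst (RingHom.id R) i 1 w)) = 0 :=
    calc expand A p (mapRingHom (σ → ℤ) f (subst (RingHom.id R) i 1 w))
        = subst f i ζ (expand R p w) := by
          rw [← RingHom.comp_apply (mapRingHom _ f), ← subst_one_eq_mapRingHom_comp, ← hζp,
            ← RingHom.comp_apply, ← subst_comp_expand, RingHom.comp_apply]
      _ = 0 := by rw [hy, map_mul, subst_geom_sum_X_self f hp hζ, zero_mul]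
  have hmap : Function.Injective (mapRingHom (σ → ℤ) f) := by
    rw [coe_mapRingHom]
    exact map_injective _ hf
  rw [X_sub_one_dvd_iff]
  exact (map_eq_zero_iff _ hmap).mp ((map_eq_zero_iff _ (expand_injective (by omega))).mp hw)

theorem expand_X_sub_one (p : ℕ) (i : σ) : expand R p (X i - 1) = X i ^ p - 1 := by
  rw [map_sub, map_one, expand_X]

end MvLaurent

open MvLaurent

theorem stmt_17_general (p : ℕ) (hp : p.Prime) (n : ℕ)
    (ψ : AddMonoidAlgebra ℤ (Fin n → ℤ) →+* AddMonoidAlgebra ℤ (Fin n → ℤ))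
    (hψ : ∀ (a : Fin n → ℤ) (b : ℤ),
      ψ (AddMonoidAlgebra.single a b) = AddMonoidAlgebra.single (p • a) b)
    (t : Fin n → AddMonoidAlgebra ℤ (Fin n → ℤ))
    (ht : ∀ i, t i = AddMonoidAlgebra.single (Pi.single i 1) 1) :
    (∀ i : Fin n, ∀ x,
        (x ∈ ψ.range ∧ ∃ y, x = (∑ a ∈ Finset.range p, t i ^ a) * y) ↔
          ∃ z ∈ ψ.range, x = (t i ^ p - 1) * z) ∧
    (∀ x, (x ∈ ψ.range ∧ ∃ y, x = (∏ i, ∑ a ∈ Finset.range p, t i ^ a) * y) ↔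
        ∃ z ∈ ψ.range,
          x = ((∏ i, ∑ a ∈ Finset.range p, t i ^ a) * ∏ i, (t i - 1)) * z) := by
  obtain rfl : ψ = expand ℤ p := eq_expand_of_map_single hψ
  obtain rfl : t = X := funext ht
  have hζ := Complex.isPrimitiveRoot_exp p hp.ne_zero
  have key (i : Fin n) (w) : ∑ a ∈ Finset.range p, X i ^ a ∣ expand ℤ p w → X i - 1 ∣ w :=
    X_sub_one_dvd_of_geom_sum_dvd_expand (f := Int.castRingHom ℂ) Int.cast_injective hp.one_lt
      (ζ := (hζ.isUnit hp.ne_zero).unit) hζ i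
  refine ⟨fun i x => ⟨?_, ?_⟩, fun x => ⟨?_, ?_⟩⟩
  · rintro ⟨⟨w, rfl⟩, hdvd⟩
    obtain ⟨q, rfl⟩ := key i w hdvd
    exact ⟨expand ℤ p q, ⟨q, rfl⟩, by rw [map_mul, expand_X_sub_one]⟩
  · rintro ⟨_, ⟨q, rfl⟩, rfl⟩
    refine ⟨⟨(X i - 1) * q, by rw [map_mul, expand_X_sub_one]⟩,
      (X i - 1) * expand ℤ p q, ?_⟩
    rw [← geom_sum_mul, mul_assoc]
  · rintro ⟨⟨w, rfl⟩, y, hy⟩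
    obtain ⟨q, rfl⟩ := prod_X_sub_one_dvd Finset.univ fun i _ =>
      key i w (dvd_trans (Finset.dvd_prod_of_mem (fun i => ∑ a ∈ Finset.range p, X i ^ a)
        (Finset.mem_univ i)) (Dvd.intro y hy.symm))
    refine ⟨expand ℤ p q, ⟨q, rfl⟩, ?_⟩
    rw [map_mul, map_prod, ← Finset.prod_mul_distrib]
    simp only [expand_X_sub_one, ← geom_sum_mul]
  · rintro ⟨_, ⟨q, rfl⟩, rfl⟩
    refine ⟨⟨(∏ i, (X i - 1)) * q, ?_⟩, _, mul_assoc _ _ _⟩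
    rw [map_mul, map_prod, ← Finset.prod_mul_distrib]
    simp only [expand_X_sub_one, ← geom_sum_mul]

/-- In `ℤ[t_1^{±1},...,t_n^{±1}]` (realized as
`AddMonoidAlgebra ℤ (Fin n → ℤ)`), with `ψ` the ring endomorphism `t_i ↦ t_i^p`
(whose range is the subring `ℤ[t_1^{±p},...,t_n^{±p}]`):
for each `i` the intersection of the principal ideal generated by
`(t_i^p-1)/(t_i-1) = 1 + t_i + ... + t_i^{p-1}` with `ℤ[t_1^{±p},...,t_n^{±p}]`
equals the ideal of `ℤ[t^{±p}]` generated by `t_i^p - 1`; consequently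
`ℤ[t^{±p}] ∩ U_1·ℤ[t^{±1}] = (U_1·δ)·ℤ[t^{±p}]` where `U_1 = ∏ (t_i^p-1)/(t_i-1)`
and `δ = ∏ (t_i - 1)`. -/
theorem stmt_17 (p : ℕ) (hp : p.Prime) (n : ℕ) (hn : 1 ≤ n)
    (ψ : AddMonoidAlgebra ℤ (Fin n → ℤ) →+* AddMonoidAlgebra ℤ (Fin n → ℤ))
    (hψ : ∀ (a : Fin n → ℤ) (b : ℤ),
      ψ (AddMonoidAlgebra.single a b) = AddMonoidAlgebra.single (p • a) b)
    (t : Fin n → AddMonoidAlgebra ℤ (Fin n → ℤ))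
    (ht : ∀ i, t i = AddMonoidAlgebra.single (Pi.single i 1) 1) :
    (∀ i : Fin n, ∀ x,
        (x ∈ ψ.range ∧ ∃ y, x = (∑ a ∈ Finset.range p, t i ^ a) * y) ↔
          ∃ z ∈ ψ.range, x = (t i ^ p - 1) * z) ∧
    (∀ x, (x ∈ ψ.range ∧ ∃ y, x = (∏ i, ∑ a ∈ Finset.range p, t i ^ a) * y) ↔
        ∃ z ∈ ψ.range,
          x = ((∏ i, ∑ a ∈ Finset.range p, t i ^ a) * ∏ i, (t i - 1)) * z) :=
  stmt_17_general p hp n ψ hψ t ht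
end
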